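/- Theorem 1 (finite improvement property): the route selection game possesses the FIP, i.e., there is no infinite sequence of strategy profiles s^0, s^1, s^2, … such that for every step t there exists a single player m_t with s^{t+1} = (s'_{m_t}, s^t_{−m_t}) for some s'_{m_t} ∈ S_{m_t} and Ũ_{m_t}(s^{t+1}) > Ũ_{m_t}(s^t); equivalently, every path of unilateral strict payoff improvements is finite. -/

import Mathlib

open Finset

variable {ι V : Type*} [Fintype ι] [Nonempty ι] [DecidableEq ι] [Fintype V] [DecidableEq V]
variable {S : ι → Type*} [∀ m, Fintype (S m)] [∀ m, Nonempty (S m)]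

/-- The congestion `z_v(s)`: the number of players whose strategy uses vertex `v`. -/
def congestion (Vert : ∀ m : ι, S m → Finset V) (s : ∀ n, S n) (v : V) : ℕ :=
  (Finset.univ.filter fun n => v ∈ Vert n (s n)).card

/-- The reward part `Ũ^V_m(s)` of player `m`'s payoff. -/
def payoffV (Vert : ∀ m : ι, S m → Finset V) (ϱ : V → ℕ → ℝ) (m : ι) (s : ∀ n, S n) : ℝ :=
  ∑ v ∈ Vert m (s m), ϱ v (congestion Vert s v)

/-- Player `m`'s payoff `Ũ_m(s) = Σ_{v ∈ Vert(s_m)} ϱ_v(z_v(s)) − c_m(s_m)`. -/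
def payoff (Vert : ∀ m : ι, S m → Finset V) (ϱ : V → ℕ → ℝ) (c : ∀ m : ι, S m → ℝ)
    (m : ι) (s : ∀ n, S n) : ℝ :=
  payoffV Vert ϱ m s - c m (s m)

/-- The vertex part `Ψ^V(s) = Σ_{v ∈ V} Σ_{q=1}^{z_v(s)} ϱ_v(q)` of the potential. -/
def potentialV (Vert : ∀ m : ι, S m → Finset V) (ϱ : V → ℕ → ℝ) (s : ∀ n, S n) : ℝ :=
  ∑ v : V, ∑ q ∈ Finset.Icc 1 (congestion Vert s v), ϱ v q

/-- The potential `Ψ(s) = Σ_{v ∈ V} Σ_{q=1}^{z_v(s)} ϱ_v(q) − Σ_{n∈ι} c_n(s_n)`. -/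
def potential (Vert : ∀ m : ι, S m → Finset V) (ϱ : V → ℕ → ℝ) (c : ∀ m : ι, S m → ℝ)
    (s : ∀ n, S n) : ℝ :=
  potentialV Vert ϱ s - ∑ n : ι, c n (s n)

/-!
Rosenthal's function `Ψ(s) = Σ_v Σ_{q ≤ z_v(s)} ϱ_v(q) − Σ_n c_n(s_n)` is an exact potential:
when player `m` deviates, the congestion at each vertex changes by at most one, so the inner sum
gains or loses only its top term `ϱ_v(z_v)`, which is exactly `m`'s reward at `v`. Hence `Ψ`
strictly increases along an improvement path, which is impossible for infinitely many steps since
there are only finitely many profiles.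
-/

section ExactPotential

variable {I : Type*} [DecidableEq I] {X : I → Type*}

def IsExactPotential (U : I → (∀ i, X i) → ℝ) (P : (∀ i, X i) → ℝ) : Prop :=
  ∀ (s : ∀ i, X i) (m : I) (a : X m),
    P (Function.update s m a) - P s = U m (Function.update s m a) - U m s

theorem IsExactPotential.sub {U W : I → (∀ i, X i) → ℝ} {P Q : (∀ i, X i) → ℝ}
    (hP : IsExactPotential U P) (hQ : IsExactPotential W Q) :
    IsExactPotential (U - W) (P - Q) := fun s m a => by
  simp only [Pi.sub_apply]
  linarith [hP s m a, hQ s m a]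

theorem isExactPotential_sum_apply [Fintype I] (c : ∀ i, X i → ℝ) :
    IsExactPotential (fun m s => c m (s m)) (fun s => ∑ i, c i (s i)) := fun s m a => by
  have hothers : ∑ i ∈ {m}ᶜ, c i (Function.update s m a i) = ∑ i ∈ {m}ᶜ, c i (s i) :=
    Finset.sum_congr rfl fun i hi =>
      by rw [Function.update_of_ne (by simpa using hi)]
  simp only [Fintype.sum_eq_add_sum_compl m, hothers, Function.update_self]
  ring

theorem IsExactPotential.not_exists_improvement_path [Finite (∀ i, X i)]
    {U : I → (∀ i, X i) → ℝ} {P : (∀ i, X i) → ℝ} (hP : IsExactPotential U P) :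
    ¬ ∃ seq : ℕ → ∀ i, X i, ∀ t : ℕ, ∃ (m : I) (a : X m),
      seq (t + 1) = Function.update (seq t) m a ∧ U m (seq t) < U m (seq (t + 1)) := by
  rintro ⟨seq, hseq⟩
  have hmono : StrictMono (P ∘ seq) := strictMono_nat_of_lt_succ fun t => by
    obtain ⟨m, a, hstep, hlt⟩ := hseq t
    have hdiff := hP (seq t) m a
    rw [← hstep] at hdiff
    simp only [Function.comp_apply]
    linarith
  exact not_injective_infinite_finite seq hmono.injective.of_comp

end ExactPotential

theorem Finset.sum_Icc_one_add_ite {M : Type*} [AddCommMonoid M] (f : ℕ → M) (k : ℕ) (p : Prop)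
    [Decidable p] :
    ∑ j ∈ Finset.Icc 1 (k + if p then 1 else 0), f j
      = ∑ j ∈ Finset.Icc 1 k, f j + if p then f (k + 1) else 0 := by
  split_ifs
  · exact Finset.sum_Icc_succ_top (by omega) f
  · simp

section Congestion

variable {ι V : Type*} [Fintype ι] [DecidableEq V] {S : ι → Type*}

theorem payoffV_eq_sum_ite [Fintype V] (Vert : ∀ m : ι, S m → Finset V) (ϱ : V → ℕ → ℝ) (m : ι)
    (s : ∀ n, S n) :
    payoffV Vert ϱ m s = ∑ v, if v ∈ Vert m (s m) then ϱ v (congestion Vert s v) else 0 := by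
  rw [Finset.sum_ite_mem, Finset.univ_inter, payoffV]

variable [DecidableEq ι]

theorem congestion_eq_card_add_ite (Vert : ∀ m : ι, S m → Finset V) (s : ∀ n, S n) (m : ι)
    (v : V) :
    congestion Vert s v
      = #{n ∈ Finset.univ.erase m | v ∈ Vert n (s n)} + if v ∈ Vert m (s m) then 1 else 0 := by
  unfold congestion
  conv_lhs => rw [← Finset.insert_erase (Finset.mem_univ m), Finset.filter_insert]
  split_ifs
  · rw [Finset.card_insert_of_notMem (by simp)]
  · simp

theorem congestion_update (Vert : ∀ m : ι, S m → Finset V) (s : ∀ n, S n) (m : ι) (a : S m)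
    (v : V) :
    congestion Vert (Function.update s m a) v
      = #{n ∈ Finset.univ.erase m | v ∈ Vert n (s n)} + if v ∈ Vert m a then 1 else 0 := by
  rw [congestion_eq_card_add_ite Vert _ m v, Function.update_self]
  congr 2
  exact Finset.filter_congr fun n hn => by
    rw [Function.update_of_ne (Finset.ne_of_mem_erase hn)]

theorem isExactPotential_potentialV [Fintype V] (Vert : ∀ m : ι, S m → Finset V)
    (ϱ : V → ℕ → ℝ) :
    IsExactPotential (payoffV Vert ϱ) (potentialV Vert ϱ) := fun s m a => by
  simp only [potentialV, payoffV_eq_sum_ite, Function.update_self, ← Finset.sum_sub_distrib]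
  refine Finset.sum_congr rfl fun v _ => ?_
  rw [congestion_update, congestion_eq_card_add_ite Vert s m, Finset.sum_Icc_one_add_ite,
    Finset.sum_Icc_one_add_ite]
  split_ifs <;> simp

theorem isExactPotential_potential [Fintype V] (Vert : ∀ m : ι, S m → Finset V)
    (ϱ : V → ℕ → ℝ) (c : ∀ m : ι, S m → ℝ) :
    IsExactPotential (payoff Vert ϱ c) (potential Vert ϱ c) :=
  (isExactPotential_potentialV Vert ϱ).sub (isExactPotential_sum_apply c)

end Congestion

/-- Theorem 1 (finite improvement property): there is no infinite sequence of strategy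
profiles in which every step is a unilateral deviation that strictly increases the
deviating player's payoff. -/
theorem route_selection_game_FIP (Vert : ∀ m : ι, S m → Finset V)
    (ϱ : V → ℕ → ℝ) (c : ∀ m : ι, S m → ℝ) :
    ¬ ∃ seq : ℕ → ∀ n, S n, ∀ t : ℕ, ∃ (m : ι) (s' : S m),
      seq (t + 1) = Function.update (seq t) m s' ∧
      payoff Vert ϱ c m (seq t) < payoff Vert ϱ c m (seq (t + 1)) :=
  (isExactPotential_potential Vert ϱ c).not_exists_improvement_path
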